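/- Let n ≥ 5 be odd and α_0,...,α_{n-1} ∈ (0,π) with ∑_{i=0}^{n-1}(π − α_i) = π. Let (u_0,...,u_{n-1}) be any spherical polygon in S² with d(u_{i−1}, u_i) = α_i (indices mod n). Then for every i, d(u_i, u_{i+2}) ≤ (π − α_{i+1}) + (π − α_{i+2}), and consequently the 'star' polygon (u_0, u_2, u_4, ..., u_{n-1}, u_1, u_3, ..., u_{n-2}) has total spherical length at most 2π. -/

import Mathlib

open Real
open scoped RealInnerProductSpace

/-- The spherical (geodesic) distance between unit vectors. -/
noncomputable def sdist (u v : EuclideanSpace ℝ (Fin 3)) : ℝ :=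
  Real.arccos ⟪u, v⟫

/-! The antipode `-v` of the middle vertex is at distance `π - d(u, v)` from `u` and
`π - d(v, w)` from `w`, so the triangle inequality through `-v` bounds `d(u, w)`. Summed over
all `i`, this bound counts every defect `π - α i` twice, giving `2 ∑ (π - α i) = 2π`. -/

namespace InnerProductGeometry

variable {V : Type*} [NormedAddCommGroup V] [InnerProductSpace ℝ V]

theorem angle_le_pi_sub_angle_add_pi_sub_angle (x y z : V) :
    angle x z ≤ (π - angle x y) + (π - angle y z) := by
  simpa only [angle_neg_right, angle_neg_left] using angle_le_angle_add_angle x (-y) z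

end InnerProductGeometry

theorem sdist_eq_angle {u v : EuclideanSpace ℝ (Fin 3)} (hu : ‖u‖ = 1) (hv : ‖v‖ = 1) :
    sdist u v = InnerProductGeometry.angle u v := by
  simp [sdist, InnerProductGeometry.angle, hu, hv]

theorem sdist_le_pi_sub_sdist_add_pi_sub_sdist {u v w : EuclideanSpace ℝ (Fin 3)}
    (hu : ‖u‖ = 1) (hv : ‖v‖ = 1) (hw : ‖w‖ = 1) :
    sdist u w ≤ (π - sdist u v) + (π - sdist v w) := by
  simpa only [sdist_eq_angle, hu, hv, hw] using
    InnerProductGeometry.angle_le_pi_sub_angle_add_pi_sub_angle u v w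

theorem star_polygon_length_le_two_pi_general {n : ℕ} [NeZero n]
    (α : Fin n → ℝ)
    (hsum : ∑ i : Fin n, (π - α i) = π)
    (u : Fin n → EuclideanSpace ℝ (Fin 3)) (hu : ∀ i : Fin n, ‖u i‖ = 1)
    (hd : ∀ i : Fin n, sdist (u (i - 1)) (u i) = α i) :
    (∀ i : Fin n,
      sdist (u i) (u (i + 2)) ≤ (π - α (i + 1)) + (π - α (i + 2))) ∧
    ∑ i : Fin n, sdist (u i) (u (i + 2)) ≤ 2 * π := by
  have hedge (i : Fin n) : sdist (u i) (u (i + 1)) = α (i + 1) := by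
    simpa using hd (i + 1)
  have hdiag (i : Fin n) : sdist (u i) (u (i + 2)) ≤ (π - α (i + 1)) + (π - α (i + 2)) := by
    have h := sdist_le_pi_sub_sdist_add_pi_sub_sdist (hu i) (hu (i + 1)) (hu (i + 1 + 1))
    have h112 : (1 + 1 : Fin n) = 2 := by simp [Fin.ext_iff, Fin.val_add]
    rwa [hedge, hedge, add_assoc, h112] at h
  have hshift (k : Fin n) : ∑ i : Fin n, (π - α (i + k)) = π :=
    (Equiv.sum_comp (Equiv.addRight k) fun i => π - α i).trans hsum
  refine ⟨hdiag, ?_⟩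
  calc ∑ i : Fin n, sdist (u i) (u (i + 2))
      ≤ ∑ i : Fin n, ((π - α (i + 1)) + (π - α (i + 2))) := Finset.sum_le_sum fun i _ => hdiag i
    _ = 2 * π := by rw [Finset.sum_add_distrib, hshift, hshift, two_mul]

/-- Let `n ≥ 5` be odd and `α i ∈ (0,π)` with `∑ (π - α i) = π`. For every spherical
polygon `u` with `sdist (u (i-1)) (u i) = α i`, the diagonals satisfy
`sdist (u i) (u (i+2)) ≤ (π - α (i+1)) + (π - α (i+2))`, and consequently the star
polygon visiting every second vertex has total spherical length at most `2π`. -/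
theorem star_polygon_length_le_two_pi {n : ℕ} [NeZero n] (hn : 5 ≤ n) (hodd : Odd n)
    (α : Fin n → ℝ) (hα : ∀ i : Fin n, α i ∈ Set.Ioo 0 π)
    (hsum : ∑ i : Fin n, (π - α i) = π)
    (u : Fin n → EuclideanSpace ℝ (Fin 3)) (hu : ∀ i : Fin n, ‖u i‖ = 1)
    (hd : ∀ i : Fin n, sdist (u (i - 1)) (u i) = α i) :
    (∀ i : Fin n,
      sdist (u i) (u (i + 2)) ≤ (π - α (i + 1)) + (π - α (i + 2))) ∧
    ∑ i : Fin n, sdist (u i) (u (i + 2)) ≤ 2 * π :=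
  star_polygon_length_le_two_pi_general α hsum u hu hd
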